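/- The function I₁ = (v₀+1)(v₁+1)(v₂+1)(v₃+1)(v₄+1)/v₂ is a Casimir of the Poisson structure with matrix Ω having nonzero entries Ω₁₃ = (v₀+1)(v₂+1), Ω₁₄ = -(v₀+1)(v₃+1), Ω₁₅ = (v₀+1)(1/v₂+1)(v₄+1), Ω₂₄ = (v₁+1)(v₃+1), Ω₂₅ = -(v₁+1)(v₄+1), Ω₃₅ = (v₂+1)(v₄+1): Ω·(∇I₁)ᵀ = 0. -/

import Mathlib

open Matrix

/-- The structure matrix of the Lotka-Volterra (3,-2) reduction. -/
noncomputable def lvOmega (v : Fin 5 → ℝ) : Matrix (Fin 5) (Fin 5) ℝ :=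
  !![0, 0, (v 0 + 1)*(v 2 + 1), -((v 0 + 1)*(v 3 + 1)), (v 0 + 1)*(1/(v 2) + 1)*(v 4 + 1);
     0, 0, 0, (v 1 + 1)*(v 3 + 1), -((v 1 + 1)*(v 4 + 1));
     -((v 0 + 1)*(v 2 + 1)), 0, 0, 0, (v 2 + 1)*(v 4 + 1);
     (v 0 + 1)*(v 3 + 1), -((v 1 + 1)*(v 3 + 1)), 0, 0, 0;
     -((v 0 + 1)*(1/(v 2) + 1)*(v 4 + 1)), (v 1 + 1)*(v 4 + 1), -((v 2 + 1)*(v 4 + 1)), 0, 0]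

/-- The integral I₁ of the Lotka-Volterra reduction. -/
noncomputable def lvI1 (v : Fin 5 → ℝ) : ℝ :=
  (v 0 + 1) * (v 1 + 1) * (v 2 + 1) * (v 3 + 1) * (v 4 + 1) / v 2

/-- Gradient of a function on ℝ⁵ (vector of partial derivatives). -/
noncomputable def grad (f : (Fin 5 → ℝ) → ℝ) (v : Fin 5 → ℝ) : Fin 5 → ℝ :=
  fun l => deriv (fun t => f (Function.update v l t)) (v l)

open Function

lemma grad_apply_of_update_eq_add_one_mul {f : (Fin 5 → ℝ) → ℝ} {v : Fin 5 → ℝ} {l : Fin 5}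
    {c : ℝ} (hf : ∀ t, f (update v l t) = (t + 1) * c) : grad f v l = c := by
  have hd : HasDerivAt (fun t : ℝ => (t + 1) * c) (1 * c) (v l) :=
    ((hasDerivAt_id _).add_const 1).mul_const c
  rw [grad, funext hf, hd.deriv, one_mul]

lemma grad_apply_of_update_eq_mul_add_one_div {f : (Fin 5 → ℝ) → ℝ} {v : Fin 5 → ℝ}
    {l : Fin 5} {c : ℝ} (hv : v l ≠ 0) (hf : ∀ t, f (update v l t) = c * (t + 1) / t) :
    grad f v l = -c / v l ^ 2 := by
  have hd : HasDerivAt (fun t : ℝ => c * (t + 1) / t)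
      ((c * 1 * v l - c * (v l + 1) * 1) / v l ^ 2) (v l) :=
    (((hasDerivAt_id _).add_const 1).const_mul c).div (hasDerivAt_id _) hv
  rw [grad, funext hf, hd.deriv]
  ring

lemma grad_lvI1 (v : Fin 5 → ℝ) (h : v 2 ≠ 0) :
    grad lvI1 v = ![(v 1 + 1) * (v 2 + 1) * (v 3 + 1) * (v 4 + 1) / v 2,
      (v 0 + 1) * (v 2 + 1) * (v 3 + 1) * (v 4 + 1) / v 2,
      -((v 0 + 1) * (v 1 + 1) * (v 3 + 1) * (v 4 + 1)) / v 2 ^ 2,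
      (v 0 + 1) * (v 1 + 1) * (v 2 + 1) * (v 4 + 1) / v 2,
      (v 0 + 1) * (v 1 + 1) * (v 2 + 1) * (v 3 + 1) / v 2] := by
  ext l
  fin_cases l <;> simp only [Fin.zero_eta, Fin.mk_one, Fin.reduceFinMk, Fin.isValue, cons_val_zero,
    cons_val_one, cons_val] <;>
  -- I₁ is affine in every coordinate except v₂, in which it has the form c (t + 1) / t.
  first
  | refine grad_apply_of_update_eq_mul_add_one_div h fun t => ?_
  | refine grad_apply_of_update_eq_add_one_mul fun t => ?_
  all_goals
    simp only [lvI1, update_self, update_of_ne, ne_eq, Fin.isValue, Fin.reduceEq,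
      not_false_eq_true]
    ring

/-- I₁ is a Casimir of the Lotka-Volterra Poisson structure: Ω · ∇I₁ = 0. -/
theorem lvI1_casimir (v : Fin 5 → ℝ) (h : v 2 ≠ 0) :
    lvOmega v *ᵥ grad lvI1 v = 0 := by
  rw [grad_lvI1 v h]
  ext i
  fin_cases i <;>
  · simp only [lvOmega, mulVec, dotProduct, Fin.sum_univ_five, Fin.zero_eta, Fin.mk_one,
      Fin.reduceFinMk, of_apply, cons_val', cons_val, cons_val_zero, cons_val_one, cons_val_fin_one,
      Fin.isValue, Pi.zero_apply]
    field_simp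
    ring
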